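/- In a finite directed acyclic graph with source s and sink t where every vertex lies on an s-t path, the minimum number of s-t paths needed to cover all vertices equals the minimum value of a feasible flow in the vertex-split network with lower bound 1 on each split edge. -/

import Mathlib

/-- A walk in a directed graph given by edge relation `E`. -/
def IsWalk {V : Type*} (E : V → V → Prop) (l : List V) : Prop :=
  l ≠ [] ∧ l.Chain' E

/-- An s-t walk. -/
def IsSTWalk {V : Type*} (E : V → V → Prop) (s t : V) (l : List V) : Prop :=
  IsWalk E l ∧ l.head? = some s ∧ l.getLast? = some t

/-- Edges of the vertex-split network: each vertex `v` is split into the entry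
vertex `Sum.inl v` (i.e. `v⁺`) and the exit vertex `Sum.inr v` (i.e. `v⁺⁺`),
joined by the split edge `(v⁺, v⁺⁺)`; each original edge `(u,v)` becomes
`(u⁺⁺, v⁺)`. -/
def SplitEdge {V : Type*} (E : V → V → Prop) : V ⊕ V → V ⊕ V → Prop :=
  fun a b =>
    match a, b with
    | Sum.inl v, Sum.inr w => v = w
    | Sum.inr u, Sum.inl v => E u v
    | _, _ => False

/-- Lower bounds of the split network: 1 on the split edge `(v⁺, v⁺⁺)` of every
internal vertex `v ∉ {s, t}`, 0 everywhere else. -/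
def SplitLB {V : Type*} [DecidableEq V] (s t : V) : V ⊕ V → V ⊕ V → ℕ :=
  fun a b =>
    match a, b with
    | Sum.inl v, Sum.inr w => if v = w ∧ v ≠ s ∧ v ≠ t then 1 else 0
    | _, _ => 0

/-- A feasible (integer) flow on the split network: supported on the edges,
meeting the lower bounds, with every edge capacity `|V| - 2`, and conserving
flow at every vertex other than the source `s⁺` and the sink `t⁺⁺`. -/
def FeasibleSplitFlow {V : Type*} [Fintype V] [DecidableEq V]
    (E : V → V → Prop) (s t : V) (f : V ⊕ V → V ⊕ V → ℕ) : Prop :=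
  (∀ a b, ¬ SplitEdge E a b → f a b = 0) ∧
  (∀ a b, SplitLB s t a b ≤ f a b) ∧
  (∀ a b, SplitEdge E a b → f a b ≤ Fintype.card V - 2) ∧
  (∀ w, w ≠ Sum.inl s → w ≠ Sum.inr t → (∑ a, f a w) = ∑ b, f w b)

/-- The value of a flow on the split network: total flow out of the source `s⁺`. -/
def SplitFlowValue {V : Type*} [Fintype V] (s : V) (f : V ⊕ V → V ⊕ V → ℕ) : ℕ :=
  ∑ b, f (Sum.inl s) b

/-! An s–t walk cover by `n` walks gives a flow of value `n` in the split network by sending one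
unit along the split image of each walk: the lower bounds hold because every internal vertex is
covered, and the capacities because walks in a DAG are paths, so no edge carries more than
`n ≤ |V| - 2` units (one walk per internal vertex already covers everything). Conversely, an
integral flow in the (acyclic) split network decomposes into as many source–sink walks as its
value; their projections to `G` are s–t walks, and they cover every internal vertex because its
split edge carries flow at least one. -/

open Finset Relation

namespace List
variable {α : Type*}

theorem mem_consecutivePairs_iff_infix {l : List α} {a b : α} :
    (a, b) ∈ l.consecutivePairs ↔ [a, b] <:+: l := by
  match l with
  | [] => simp
  | [x] =>
    simp only [consecutivePairs, tail_cons, zip_nil_right, not_mem_nil, false_iff]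
    exact fun h => by simpa using h.length_le
  | x :: y :: r =>
    have ih := mem_consecutivePairs_iff_infix (l := y :: r) (a := a) (b := b)
    simp only [consecutivePairs, tail_cons, zip_cons_cons, mem_cons, Prod.mk.injEq] at ih ⊢
    rw [ih, infix_cons_iff (l₂ := y :: r)]
    simp [cons_prefix_cons]

theorem IsChain.rel_of_mem_consecutivePairs {R : α → α → Prop} {l : List α} (hl : l.IsChain R)
    {a b : α} (h : (a, b) ∈ l.consecutivePairs) : R a b :=
  isChain_pair.1 (hl.infix (mem_consecutivePairs_iff_infix.1 h))

theorem map_fst_consecutivePairs (l : List α) :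
    l.consecutivePairs.map Prod.fst = l.dropLast := by
  match l with
  | [] | [_] => rfl
  | x :: y :: r => simp [consecutivePairs, ← map_fst_consecutivePairs (y :: r)]

theorem map_snd_consecutivePairs (l : List α) : l.consecutivePairs.map Prod.snd = l.tail :=
  map_snd_zip (by simp)

theorem Nodup.consecutivePairs {l : List α} (h : l.Nodup) : l.consecutivePairs.Nodup :=
  Nodup.of_map Prod.fst <| map_fst_consecutivePairs l ▸ h.sublist (dropLast_sublist l)

theorem IsChain.nodup {R : α → α → Prop} (hR : ∀ a, ¬ TransGen R a a) {l : List α}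
    (hl : l.IsChain R) : l.Nodup :=
  have : Std.Irrefl (TransGen R) := ⟨hR⟩
  (isChain_iff_pairwise.1 (hl.imp fun _ _ => TransGen.single)).nodup

theorem sum_count_mk_left {β : Type*} [Fintype α] [DecidableEq α] [DecidableEq β]
    (L : List (α × β)) (x : β) : ∑ a, L.count (a, x) = (L.map Prod.snd).count x := by
  induction L with
  | nil => simp
  | cons p L ih =>
    simp only [count_cons, Finset.sum_add_distrib, ih, map_cons, beq_iff_eq, Prod.ext_iff]
    split_ifs with h <;> simp [h, Finset.sum_ite_eq]

theorem sum_count_mk_right {β : Type*} [Fintype β] [DecidableEq α] [DecidableEq β]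
    (L : List (α × β)) (x : α) : ∑ b, L.count (x, b) = (L.map Prod.fst).count x := by
  induction L with
  | nil => simp
  | cons p L ih =>
    simp only [count_cons, Finset.sum_add_distrib, ih, map_cons, beq_iff_eq, Prod.ext_iff]
    split_ifs with h <;> simp [h, Finset.sum_ite_eq]

end List

theorem wellFounded_transGen_of_acyclic {α : Type*} [Finite α] {R : α → α → Prop}
    (hR : ∀ a, ¬ TransGen R a a) : WellFounded (TransGen R) :=
  have : Std.Irrefl (TransGen R) := ⟨hR⟩
  Finite.wellFounded_of_trans_of_irrefl _

namespace IsSTWalk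
variable {α : Type*} {R : α → α → Prop} {σ τ : α} {w : List α}

theorem mono {S : α → α → Prop} (hRS : ∀ a b, R a b → S a b) (hw : IsSTWalk R σ τ w) :
    IsSTWalk S σ τ w :=
  ⟨⟨hw.1.1, hw.1.2.imp hRS⟩, hw.2⟩

theorem cons {x : α} (hxσ : R x σ) (hw : IsSTWalk R σ τ w) : IsSTWalk R x τ (x :: w) := by
  obtain ⟨⟨hne, hch⟩, hhead, hlast⟩ := hw
  obtain ⟨y, w, rfl⟩ := List.exists_cons_of_ne_nil hne
  cases hhead
  exact ⟨⟨by simp, hch.cons_cons hxσ⟩, rfl, by simpa using hlast⟩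

variable [DecidableEq α]

theorem count_tail (hw : IsSTWalk R σ τ w) {x : α} (hx : x ≠ σ) :
    w.tail.count x = w.count x := by
  simp [List.count_tail, hw.2.1, hx.symm]

theorem count_dropLast (hw : IsSTWalk R σ τ w) {x : α} (hx : x ≠ τ) :
    w.dropLast.count x = w.count x := by
  conv_rhs => rw [← List.dropLast_append_getLast hw.1.1]
  simp [List.getLast_of_mem_getLast? hw.2.2, hx.symm]

end IsSTWalk

section Flow
variable {α : Type*} [Fintype α] {R : α → α → Prop} {σ τ : α}

def inflow (f : α → α → ℕ) (x : α) : ℕ := ∑ a, f a x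

def outflow (f : α → α → ℕ) (x : α) : ℕ := ∑ b, f x b

structure IsFlow (R : α → α → Prop) (σ τ : α) (f : α → α → ℕ) : Prop where
  eq_zero_of_not_rel : ∀ a b, ¬ R a b → f a b = 0
  inflow_eq_outflow : ∀ x, x ≠ σ → x ≠ τ → inflow f x = outflow f x

theorem inflow_sum {ι : Type*} [Fintype ι] (f : ι → α → α → ℕ) (x : α) :
    inflow (∑ i, f i) x = ∑ i, inflow (f i) x := by
  simp only [inflow, Finset.sum_apply]
  exact Finset.sum_comm

theorem outflow_sum {ι : Type*} [Fintype ι] (f : ι → α → α → ℕ) (x : α) :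
    outflow (∑ i, f i) x = ∑ i, outflow (f i) x := by
  simp only [outflow, Finset.sum_apply]
  exact Finset.sum_comm

theorem inflow_tsub {f g : α → α → ℕ} (h : g ≤ f) (x : α) :
    inflow (f - g) x = inflow f x - inflow g x :=
  Finset.sum_tsub_distrib _ fun a _ => h a x

theorem outflow_tsub {f g : α → α → ℕ} (h : g ≤ f) (x : α) :
    outflow (f - g) x = outflow f x - outflow g x :=
  Finset.sum_tsub_distrib _ fun b _ => h x b

namespace IsFlow

theorem sum {ι : Type*} [Fintype ι] {f : ι → α → α → ℕ} (hf : ∀ i, IsFlow R σ τ (f i)) :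
    IsFlow R σ τ (∑ i, f i) where
  eq_zero_of_not_rel a b hab := by
    simp [Finset.sum_apply, fun i => (hf i).eq_zero_of_not_rel a b hab]
  inflow_eq_outflow x hσ hτ := by
    simp only [inflow_sum, outflow_sum, (hf _).inflow_eq_outflow x hσ hτ]

theorem tsub {f g : α → α → ℕ} (hf : IsFlow R σ τ f) (hg : IsFlow R σ τ g) (hgf : g ≤ f) :
    IsFlow R σ τ (f - g) where
  eq_zero_of_not_rel a b hab := by simp [hf.eq_zero_of_not_rel a b hab]
  inflow_eq_outflow x hσ hτ := by
    rw [inflow_tsub hgf, outflow_tsub hgf, hf.inflow_eq_outflow x hσ hτ,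
      hg.inflow_eq_outflow x hσ hτ]

variable {f : α → α → ℕ}

theorem rel_of_pos (hf : IsFlow R σ τ f) {a b : α} (h : 0 < f a b) : R a b :=
  not_not.1 (mt (hf.eq_zero_of_not_rel a b) h.ne')

theorem outflow_eq_zero_of_forall_not_rel (hf : IsFlow R σ τ f) {x : α} (hx : ∀ b, ¬ R x b) :
    outflow f x = 0 :=
  Finset.sum_eq_zero fun b _ => hf.eq_zero_of_not_rel x b (hx b)

theorem eq_zero (hf : IsFlow R σ τ f) (hR : ∀ a, ¬ TransGen R a a) (hτ : ∀ b, ¬ R τ b)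
    (hσ0 : outflow f σ = 0) : f = 0 := by
  by_contra hne
  obtain ⟨a₀, b₀, h₀⟩ : ∃ a b, f a b ≠ 0 := by simpa [funext_iff] using hne
  obtain ⟨a, ⟨b, hab⟩, hmin⟩ := (wellFounded_transGen_of_acyclic hR).has_min
    {a | ∃ b, f a b ≠ 0} ⟨a₀, b₀, h₀⟩
  -- a minimal vertex carrying flow has no inflow but positive outflow, so it is the source
  have hin : inflow f a = 0 := Finset.sum_eq_zero fun c _ => by
    by_contra hc
    exact hmin c ⟨a, hc⟩ (.single (hf.rel_of_pos (Nat.pos_of_ne_zero hc)))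
  have hout : outflow f a ≠ 0 := by
    simpa [outflow, Finset.sum_eq_zero_iff] using ⟨b, hab⟩
  have haτ : a ≠ τ := by
    rintro rfl
    exact hout (hf.outflow_eq_zero_of_forall_not_rel hτ)
  have haσ : a ≠ σ := by
    rintro rfl
    exact hout hσ0
  exact hout (hin ▸ (hf.inflow_eq_outflow a haσ haτ).symm)

theorem exists_isSTWalk_pos (hf : IsFlow R σ τ f) (hR : ∀ a, ¬ TransGen R a a)
    (hσ : ∀ a, ¬ R a σ) : ∀ x, 0 < outflow f x → ∃ w, IsSTWalk (fun a b => 0 < f a b) x τ w := by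
  intro x
  induction x using (wellFounded_transGen_of_acyclic (R := flip R)
    fun a h => hR a (transGen_swap.1 h)).induction with
  | _ x ih =>
  intro hx
  obtain ⟨y, -, hxy⟩ := Finset.sum_pos_iff.1 hx
  by_cases hyτ : y = τ
  · exact ⟨[x, y], ⟨⟨by simp, List.isChain_pair.2 hxy⟩, rfl, by simp [hyτ]⟩⟩
  have hy : 0 < outflow f y := by
    rw [← hf.inflow_eq_outflow y (fun h => hσ x (h ▸ hf.rel_of_pos hxy)) hyτ]
    exact Finset.sum_pos_iff.2 ⟨x, Finset.mem_univ x, hxy⟩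
  obtain ⟨w, hw⟩ := ih y (.single (hf.rel_of_pos hxy)) hy
  exact ⟨x :: w, hw.cons hxy⟩

end IsFlow

variable [DecidableEq α]

def walkFlow (w : List α) (a b : α) : ℕ := w.consecutivePairs.count (a, b)

omit [Fintype α] in
theorem walkFlow_pos_iff {w : List α} {a b : α} :
    0 < walkFlow w a b ↔ (a, b) ∈ w.consecutivePairs :=
  List.count_pos_iff

omit [Fintype α] in
theorem walkFlow_le_one {w : List α} (hw : w.Nodup) (a b : α) : walkFlow w a b ≤ 1 :=
  List.nodup_iff_count_le_one.1 hw.consecutivePairs _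

theorem inflow_walkFlow (w : List α) (x : α) : inflow (walkFlow w) x = w.tail.count x := by
  simp only [inflow, walkFlow, List.sum_count_mk_left, List.map_snd_consecutivePairs]

theorem outflow_walkFlow (w : List α) (x : α) :
    outflow (walkFlow w) x = w.dropLast.count x := by
  simp only [outflow, walkFlow, List.sum_count_mk_right, List.map_fst_consecutivePairs]

theorem isFlow_walkFlow {w : List α} (hw : IsSTWalk R σ τ w) : IsFlow R σ τ (walkFlow w) where
  eq_zero_of_not_rel a b hab := Nat.eq_zero_of_not_pos fun h =>
    hab (hw.1.2.rel_of_mem_consecutivePairs (walkFlow_pos_iff.1 h))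
  inflow_eq_outflow x hσ hτ := by
    rw [inflow_walkFlow, outflow_walkFlow, hw.count_tail hσ, hw.count_dropLast hτ]

theorem outflow_walkFlow_source {w : List α} (hw : IsSTWalk R σ τ w) (hnd : w.Nodup)
    (hστ : σ ≠ τ) : outflow (walkFlow w) σ = 1 := by
  rw [outflow_walkFlow, hw.count_dropLast hστ, List.count_eq_one_of_mem hnd]
  exact List.mem_of_mem_head? hw.2.1

theorem IsFlow.exists_eq_sum_walkFlow {f : α → α → ℕ} (hf : IsFlow R σ τ f)
    (hR : ∀ a, ¬ TransGen R a a) (hσ : ∀ a, ¬ R a σ) (hτ : ∀ b, ¬ R τ b) :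
    ∃ w : Fin (outflow f σ) → List α, (∀ i, IsSTWalk R σ τ (w i)) ∧ f = ∑ i, walkFlow (w i) := by
  generalize hn : outflow f σ = n
  induction n generalizing f with
  | zero => exact ⟨Fin.elim0, nofun, by simp [hf.eq_zero hR hτ hn]⟩
  | succ n ih =>
    obtain ⟨w, hw⟩ := hf.exists_isSTWalk_pos hR hσ σ (by omega)
    have hwR : IsSTWalk R σ τ w := hw.mono fun _ _ => hf.rel_of_pos
    have hστ : σ ≠ τ := by
      rintro rfl
      simp [hf.outflow_eq_zero_of_forall_not_rel hτ] at hn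
    have hnd : w.Nodup := hwR.1.2.nodup hR
    have hle : walkFlow w ≤ f := fun a b => by
      rcases Nat.eq_zero_or_pos (walkFlow w a b) with h | h
      · simp [h]
      · exact (walkFlow_le_one hnd a b).trans
          (hw.1.2.rel_of_mem_consecutivePairs (walkFlow_pos_iff.1 h))
    obtain ⟨W, hW, hsum⟩ := ih (hf.tsub (isFlow_walkFlow hwR) hle)
      (by rw [outflow_tsub hle, hn, outflow_walkFlow_source hwR hnd hστ, Nat.add_sub_cancel])
    refine ⟨Fin.cons w W, Fin.cases hwR hW, ?_⟩
    rw [Fin.sum_univ_succ]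
    simp only [Fin.cons_zero, Fin.cons_succ, ← hsum, add_tsub_cancel_of_le hle]

end Flow

section Split
variable {V : Type*} {E : V → V → Prop}

def splitWalk (l : List V) : List (V ⊕ V) := l.flatMap fun v => [.inl v, .inr v]

@[simp] theorem splitWalk_nil : splitWalk ([] : List V) = [] := rfl

@[simp] theorem splitWalk_cons (v : V) (l : List V) :
    splitWalk (v :: l) = .inl v :: .inr v :: splitWalk l := rfl

@[simp] theorem mem_splitWalk_inl {v : V} {l : List V} : .inl v ∈ splitWalk l ↔ v ∈ l := by
  simp [splitWalk]

theorem head?_splitWalk (l : List V) : (splitWalk l).head? = l.head?.map .inl := by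
  cases l <;> rfl

theorem getLast?_splitWalk (l : List V) : (splitWalk l).getLast? = l.getLast?.map .inr := by
  match l with
  | [] | [_] => rfl
  | a :: b :: l =>
    have ih := getLast?_splitWalk (b :: l)
    simp only [splitWalk_cons, List.getLast?_cons_cons] at ih ⊢
    exact ih

theorem mem_consecutivePairs_splitWalk {v : V} {l : List V} (hv : v ∈ l) :
    (.inl v, .inr v) ∈ (splitWalk l).consecutivePairs := by
  obtain ⟨l₁, l₂, rfl⟩ := List.append_of_mem hv
  rw [List.mem_consecutivePairs_iff_infix]
  exact ⟨splitWalk l₁, splitWalk l₂, by simp [splitWalk]⟩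

theorem splitEdge_iff {a b : V ⊕ V} :
    SplitEdge E a b ↔ (∃ v, a = .inl v ∧ b = .inr v) ∨ ∃ u v, a = .inr u ∧ b = .inl v ∧ E u v := by
  cases a <;> cases b <;> simp [SplitEdge, eq_comm]

theorem isChain_splitWalk_iff {l : List V} :
    (splitWalk l).IsChain (SplitEdge E) ↔ l.IsChain E := by
  match l with
  | [] | [_] => simp [SplitEdge]
  | a :: b :: l =>
    have ih : (splitWalk (b :: l)).IsChain (SplitEdge E) ↔ _ := isChain_splitWalk_iff
    simp only [splitWalk_cons, List.isChain_cons_cons] at ih ⊢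
    simp_all [SplitEdge]

theorem isSTWalk_splitWalk_iff {s t : V} {l : List V} :
    IsSTWalk (SplitEdge E) (.inl s) (.inr t) (splitWalk l) ↔ IsSTWalk E s t l :=
  and_congr (and_congr (by cases l <;> simp) isChain_splitWalk_iff)
    (and_congr (by simp [head?_splitWalk]) (by simp [getLast?_splitWalk]))

theorem exists_splitWalk_eq {w : List (V ⊕ V)} {a b : V} (hw : w.IsChain (SplitEdge E))
    (ha : w.head? = some (.inl a)) (hb : w.getLast? = some (.inr b)) :
    ∃ l, splitWalk l = w := by
  match w, hw with
  | [], _ => simp at ha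
  | [_], _ => simp_all
  | x :: y :: rest, .cons_cons hxy hrest =>
    obtain rfl : x = .inl a := by simpa using ha
    obtain rfl : y = .inr a := by simpa [splitEdge_iff, eq_comm] using hxy
    cases rest with
    | nil => exact ⟨[a], rfl⟩
    | cons z rest =>
      obtain ⟨c, rfl⟩ : ∃ c, z = .inl c := by cases z <;> simp_all [SplitEdge]
      obtain ⟨l, hl⟩ := exists_splitWalk_eq (List.isChain_cons_cons.1 hrest).2 rfl
        (by simpa using hb)
      exact ⟨a :: l, by simp [hl]⟩

theorem exists_isSTWalk_splitWalk_eq {w : List (V ⊕ V)} {s t : V}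
    (hw : IsSTWalk (SplitEdge E) (.inl s) (.inr t) w) :
    ∃ l, IsSTWalk E s t l ∧ splitWalk l = w :=
  let ⟨l, hl⟩ := exists_splitWalk_eq hw.1.2 hw.2.1 hw.2.2
  ⟨l, isSTWalk_splitWalk_iff.1 (hl ▸ hw), hl⟩

theorem transGen_splitEdge {a b : V ⊕ V} (h : TransGen (SplitEdge E) a b) :
    TransGen E (a.elim id id) (b.elim id id) ∨ ∃ v, a = .inl v ∧ b = .inr v := by
  induction h with
  | single hab =>
    rcases splitEdge_iff.1 hab with ⟨v, rfl, rfl⟩ | ⟨u, v, rfl, rfl, huv⟩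
    · exact .inr ⟨v, rfl, rfl⟩
    · exact .inl (.single huv)
  | tail _ hbc ih =>
    rcases splitEdge_iff.1 hbc with ⟨v, rfl, rfl⟩ | ⟨u, v, rfl, rfl, huv⟩
    · rcases ih with ih | ⟨_, _, ⟨⟩⟩
      exact .inl ih
    · rcases ih with ih | ⟨_, rfl, ⟨⟩⟩
      · exact .inl (ih.tail huv)
      · exact .inl (.single huv)

theorem splitEdge_acyclic (hE : ∀ v, ¬ TransGen E v v) (a : V ⊕ V) :
    ¬ TransGen (SplitEdge E) a a := fun h => by
  rcases transGen_splitEdge h with h | ⟨v, rfl, h⟩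
  · exact hE _ h
  · cases h

end Split

section Cover
variable {V : Type*} {E : V → V → Prop} {s t : V}

def IsSTCover (E : V → V → Prop) (s t : V) {n : ℕ} (p : Fin n → List V) : Prop :=
  (∀ i, IsSTWalk E s t (p i)) ∧ ∀ v, ∃ i, v ∈ p i

theorem isSTCover_of_forall_internal {n : ℕ} {p : Fin n → List V}
    (hp : ∀ i, IsSTWalk E s t (p i)) (hint : ∃ u, u ≠ s ∧ u ≠ t)
    (h : ∀ v, v ≠ s → v ≠ t → ∃ i, v ∈ p i) : IsSTCover E s t p := by
  obtain ⟨u, hus, hut⟩ := hint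
  obtain ⟨i₀, -⟩ := h u hus hut
  refine ⟨hp, fun v => ?_⟩
  by_cases hvs : v = s
  · exact ⟨i₀, hvs ▸ List.mem_of_mem_head? (hp i₀).2.1⟩
  by_cases hvt : v = t
  · exact ⟨i₀, hvt ▸ List.mem_of_mem_getLast? (hp i₀).2.2⟩
  exact h v hvs hvt

variable [Fintype V] [DecidableEq V]

theorem exists_isSTCover_internal (hall : ∀ v, ∃ p, IsSTWalk E s t p ∧ v ∈ p)
    (hint : ∃ u, u ≠ s ∧ u ≠ t) :
    ∃ p : Fin #((univ.erase s).erase t) → List V, IsSTCover E s t p := by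
  choose q hq hmem using hall
  set I := (univ.erase s).erase t
  exact ⟨fun i => q (I.equivFin.symm i), isSTCover_of_forall_internal (fun i => hq _) hint
    fun v hvs hvt => ⟨I.equivFin ⟨v, by simp [I, hvs, hvt]⟩, by simpa using hmem v⟩⟩

theorem feasibleSplitFlow_of_isSTCover (hE : ∀ v, ¬ TransGen E v v) {n : ℕ}
    {p : Fin n → List V} (hp : IsSTCover E s t p) (hn : n ≤ Fintype.card V - 2) :
    FeasibleSplitFlow E s t (∑ i, walkFlow (splitWalk (p i))) := by
  have hw i : IsSTWalk (SplitEdge E) (.inl s) (.inr t) (splitWalk (p i)) :=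
    isSTWalk_splitWalk_iff.2 (hp.1 i)
  have hflow := IsFlow.sum fun i => isFlow_walkFlow (hw i)
  refine ⟨hflow.eq_zero_of_not_rel, fun a b => ?_, fun a b _ => ?_, hflow.inflow_eq_outflow⟩
  · rcases a with v | v <;> rcases b with w | w <;> simp only [SplitLB, Nat.zero_le]
    split_ifs with h
    · obtain ⟨rfl, -⟩ := h
      obtain ⟨i, hi⟩ := hp.2 v
      rw [Finset.sum_apply, Finset.sum_apply, Nat.one_le_iff_ne_zero, ← Nat.pos_iff_ne_zero]
      exact Finset.sum_pos_iff.2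
        ⟨i, mem_univ i, walkFlow_pos_iff.2 (mem_consecutivePairs_splitWalk hi)⟩
    · exact Nat.zero_le _
  · calc _ = ∑ i, walkFlow (splitWalk (p i)) a b := by simp only [Finset.sum_apply]
      _ ≤ ∑ _i : Fin n, 1 := Finset.sum_le_sum fun i _ =>
          walkFlow_le_one ((hw i).1.2.nodup (splitEdge_acyclic hE)) a b
      _ ≤ _ := by simpa using hn

theorem splitFlowValue_sum_walkFlow (hE : ∀ v, ¬ TransGen E v v) {n : ℕ}
    {p : Fin n → List V} (hp : ∀ i, IsSTWalk E s t (p i)) :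
    SplitFlowValue s (∑ i, walkFlow (splitWalk (p i))) = n := by
  have hw i : IsSTWalk (SplitEdge E) (.inl s) (.inr t) (splitWalk (p i)) :=
    isSTWalk_splitWalk_iff.2 (hp i)
  change outflow _ (Sum.inl s) = n
  simp [outflow_sum, outflow_walkFlow_source (hw _) ((hw _).1.2.nodup (splitEdge_acyclic hE))]

theorem exists_isSTCover_of_feasibleSplitFlow (hE : ∀ v, ¬ TransGen E v v)
    (hs : ∀ u, ¬ E u s) (ht : ∀ u, ¬ E t u) (hint : ∃ u, u ≠ s ∧ u ≠ t)
    {f : V ⊕ V → V ⊕ V → ℕ} (hf : FeasibleSplitFlow E s t f) :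
    ∃ p : Fin (SplitFlowValue s f) → List V, IsSTCover E s t p := by
  have hflow : IsFlow (SplitEdge E) (.inl s) (.inr t) f := ⟨hf.1, hf.2.2.2⟩
  obtain ⟨w, hw, hsum⟩ := hflow.exists_eq_sum_walkFlow (splitEdge_acyclic hE)
    (fun a => by simp [splitEdge_iff, hs]) (fun b => by simp [splitEdge_iff, ht])
  choose p hp hpw using fun i => exists_isSTWalk_splitWalk_eq (hw i)
  refine ⟨p, isSTCover_of_forall_internal hp hint fun v hvs hvt => ?_⟩
  have hpos : 0 < f (.inl v) (.inr v) := by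
    simpa [SplitLB, hvs, hvt, Nat.one_le_iff_ne_zero, Nat.pos_iff_ne_zero]
      using hf.2.1 (.inl v) (.inr v)
  rw [hsum, Finset.sum_apply, Finset.sum_apply, Finset.sum_pos_iff] at hpos
  obtain ⟨i, -, hi⟩ := hpos
  have hmem := (List.mem_consecutivePairs_iff_infix.1 (walkFlow_pos_iff.1 hi)).subset
    (List.mem_cons_self (a := Sum.inl v))
  exact ⟨i, by simpa [← hpw i] using hmem⟩

end Cover

/-- In a finite DAG (source `s` of in-degree 0, sink `t` of
out-degree 0, `|V| ≥ 3`, every vertex on some s-t path), the minimum number of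
s-t paths needed to cover all vertices equals the minimum value of a feasible
flow in the vertex-split network. -/
theorem min_cover_eq_min_flow {V : Type*} [Fintype V] [DecidableEq V]
    (E : V → V → Prop) (s t : V) (hst : s ≠ t)
    (hcard : 3 ≤ Fintype.card V)
    (hacyc : ∀ v, ¬ Relation.TransGen E v v)
    (hs : ∀ u, ¬ E u s) (ht : ∀ u, ¬ E t u)
    (hall : ∀ v : V, ∃ p : List V, IsSTWalk E s t p ∧ v ∈ p) :
    sInf {n : ℕ | ∃ p : Fin n → List V,
        (∀ i, IsSTWalk E s t (p i)) ∧ (∀ v : V, ∃ i, v ∈ p i)}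
      = sInf {k : ℕ | ∃ f : V ⊕ V → V ⊕ V → ℕ,
        FeasibleSplitFlow E s t f ∧ SplitFlowValue s f = k} := by
  change sInf {n | ∃ p : Fin n → List V, IsSTCover E s t p} = _
  have hI : #((univ.erase s).erase t) = Fintype.card V - 2 := by
    rw [card_erase_of_mem (by simp [hst.symm]), card_erase_of_mem (mem_univ s), card_univ]
    rfl
  have hint : ∃ u, u ≠ s ∧ u ≠ t := by
    obtain ⟨u, hu⟩ := card_pos.1 (by omega : 0 < #((univ.erase s).erase t))
    exact ⟨u, by simpa [and_comm] using hu⟩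
  obtain ⟨p₀, hp₀⟩ := exists_isSTCover_internal hall hint
  have hcov : #((univ.erase s).erase t) ∈ {n | ∃ p : Fin n → List V, IsSTCover E s t p} :=
    ⟨p₀, hp₀⟩
  obtain ⟨p, hp⟩ := Nat.sInf_mem ⟨_, hcov⟩
  have hmem : sInf {n | ∃ p : Fin n → List V, IsSTCover E s t p} ∈
      {k | ∃ f, FeasibleSplitFlow E s t f ∧ SplitFlowValue s f = k} :=
    ⟨_, feasibleSplitFlow_of_isSTCover hacyc hp (hI ▸ Nat.sInf_le hcov),
      splitFlowValue_sum_walkFlow hacyc hp.1⟩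
  refine le_antisymm (le_csInf ⟨_, hmem⟩ fun k hk => ?_) (Nat.sInf_le hmem)
  obtain ⟨f, hf, rfl⟩ := hk
  exact Nat.sInf_le (exists_isSTCover_of_feasibleSplitFlow hacyc hs ht hint hf)
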